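/- In an accelerating FLRW universe (ȧ > 0 and ä > 0), the function f = −(1/2)a² is never spacetime convex: there is no constant c > 0 with both −ȧ² − a·ä ≥ −c and ȧ² ≥ c holding at every time. -/
import Mathlib


/-- **In an accelerating FLRW universe `f = -½a²` is never spacetime convex.**
If on a nonempty time interval `I` the scale factor satisfies `a > 0`, `ȧ > 0`, `ä > 0`,
then there is no constant `c > 0` with both `ȧ² ≥ c` (spatial Hessian condition) and
`ȧ² + a ä ≤ c` (ττ Hessian condition `-ȧ² - a ä ≥ -c`) at every time. -/
theorem flrw_accelerating_not_spacetime_convex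
    (I : Set ℝ) (hI : I.Nonempty)
    (a : ℝ → ℝ) (ha : ContDiff ℝ (⊤ : ℕ∞) a)
    (hpos : ∀ τ ∈ I, 0 < a τ)
    (hexp : ∀ τ ∈ I, 0 < deriv a τ)
    (hacc : ∀ τ ∈ I, 0 < deriv (deriv a) τ) :
    ¬ ∃ c > (0:ℝ), ∀ τ ∈ I,
        c ≤ (deriv a τ) ^ 2 ∧ (deriv a τ) ^ 2 + a τ * deriv (deriv a) τ ≤ c := by
  rintro ⟨c, hc, h⟩
  obtain ⟨τ, hτ⟩ := hI
  obtain ⟨h1, h2⟩ := h τ hτ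
  nlinarith [hpos τ hτ, hacc τ hτ, mul_pos (hpos τ hτ) (hacc τ hτ)]
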